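/- arXiv:2106.03014 — 5 statements merged into one kernel-verified Lean document; each statement's English description precedes it below -/
import Mathlib

section
/- If W follows a Gamma(r, α) distribution, then its zero-biased distribution is Gamma(r+1, α). -/
open MeasureTheory ProbabilityTheory Real

noncomputable section

/-- `ν` is the size-biased distribution of `μ`: `E[V f(V)] = E[V] · E[f(V^s)]`
for all bounded measurable test functions `f`. -/
def IsSizeBiased (μ ν : Measure ℝ) : Prop :=
  ∀ f : ℝ → ℝ, Measurable f → (∀ x, |f x| ≤ 1) →
    ∫ x, x * f x ∂μ = (∫ x, x ∂μ) * ∫ x, f x ∂ν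

/-- `ν` is the zero-biased distribution of `μ`: `E[(W−μ) f(W)] = σ² · E[f'(W^z)]`
for all differentiable test functions `f` with bounded derivative. -/
def IsZeroBiased (μ ν : Measure ℝ) : Prop :=
  ∀ f : ℝ → ℝ, Differentiable ℝ f → (∀ x, |deriv f x| ≤ 1) →
    ∫ x, (x - ∫ y, y ∂μ) * f x ∂μ
      = (∫ x, (x - ∫ y, y ∂μ) ^ 2 ∂μ) * ∫ x, deriv f x ∂ν

/-!
On `(0, ∞)` we have `(α x - r) x^(r-1) e^(-α x) = -(x^r e^(-α x))'`, so integrating by parts gives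
`E[(α W - r) f(W)] = (α^r / Γ(r)) ∫₀^∞ f'(x) x^r e^(-α x) dx = (r / α) E[f'(W')]` with
`W' ~ Gamma(r+1, α)`, because `x^r e^(-α x)` is proportional to the `Gamma(r+1, α)` density.
Dividing by `α` gives the zero-bias identity, since `E[W] = r / α` and `Var W = r / α²`; the
variance itself comes from the same identity applied to `f(x) = x - r / α`.
-/

open Set Filter Topology
open scoped ENNReal NNReal

section RpowExpKernel

variable {α s a b : ℝ} {g : ℝ → ℝ}

lemma integrableOn_rpow_mul_exp_neg_mul (hα : 0 < α) (hs : -1 < s) :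
    IntegrableOn (fun x : ℝ => x ^ s * exp (-(α * x))) (Ioi 0) := by
  simpa only [rpow_one, neg_mul] using integrableOn_rpow_mul_exp_neg_mul_rpow hs zero_lt_one hα

lemma hasDerivAt_rpow_mul_exp_neg_mul {x : ℝ} (hx : 0 < x) :
    HasDerivAt (fun x => x ^ s * exp (-(α * x)))
      (s * (x ^ (s - 1) * exp (-(α * x))) - α * (x ^ s * exp (-(α * x)))) x :=
  ((hasDerivAt_rpow_const (Or.inl hx.ne')).mul ((hasDerivAt_id x).const_mul α).neg.exp).congr_deriv
    (by simp only [id, Pi.neg_apply]; ring)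

lemma abs_mul_rpow_mul_exp_neg_mul_le (hg : ∀ x > 0, |g x| ≤ a + b * x) {x : ℝ} (hx : 0 < x) :
    |g x * (x ^ s * exp (-(α * x)))|
      ≤ a * (x ^ s * exp (-(α * x))) + b * (x ^ (s + 1) * exp (-(α * x))) := by
  have hk : 0 ≤ x ^ s * exp (-(α * x)) := by positivity
  rw [abs_mul, abs_of_nonneg hk, rpow_add_one hx.ne']
  calc |g x| * (x ^ s * exp (-(α * x))) ≤ (a + b * x) * (x ^ s * exp (-(α * x))) :=
        mul_le_mul_of_nonneg_right (hg x hx) hk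
    _ = _ := by ring

lemma integrableOn_mul_rpow_mul_exp_neg_mul (hα : 0 < α) (hs : -1 < s)
    (hgm : AEStronglyMeasurable g (volume.restrict (Ioi 0))) (hg : ∀ x > 0, |g x| ≤ a + b * x) :
    IntegrableOn (fun x => g x * (x ^ s * exp (-(α * x)))) (Ioi 0) := by
  refine Integrable.mono' (((integrableOn_rpow_mul_exp_neg_mul hα hs).const_mul a).add
      ((integrableOn_rpow_mul_exp_neg_mul (s := s + 1) hα (by linarith)).const_mul b))
    (hgm.mul ((measurable_id.pow_const s).mul (by fun_prop)).aestronglyMeasurable) ?_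
  filter_upwards [ae_restrict_mem measurableSet_Ioi] with x hx
  exact abs_mul_rpow_mul_exp_neg_mul_le hg hx

lemma tendsto_mul_rpow_mul_exp_neg_mul_atTop (hα : 0 < α) (hg : ∀ x > 0, |g x| ≤ a + b * x) :
    Tendsto (fun x => g x * (x ^ s * exp (-(α * x)))) atTop (𝓝 0) := by
  have h := ((tendsto_rpow_mul_exp_neg_mul_atTop_nhds_zero s α hα).const_mul a).add
    ((tendsto_rpow_mul_exp_neg_mul_atTop_nhds_zero (s + 1) α hα).const_mul b)
  simp only [neg_mul, mul_zero, add_zero] at h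
  refine squeeze_zero_norm' ?_ h
  filter_upwards [eventually_gt_atTop 0] with x hx
  exact abs_mul_rpow_mul_exp_neg_mul_le hg hx

end RpowExpKernel

lemma abs_le_abs_add_mul_of_abs_deriv_le {f : ℝ → ℝ} {C : ℝ} (hf : Differentiable ℝ f)
    (hf' : ∀ x, |deriv f x| ≤ C) (x : ℝ) : |f x| ≤ |f 0| + C * |x| := by
  have h := convex_univ.norm_image_sub_le_of_norm_deriv_le (fun y _ => hf y) (fun y _ => hf' y)
    (mem_univ 0) (mem_univ x)
  simp only [Real.norm_eq_abs, sub_zero] at h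
  linarith [abs_sub_abs_le_abs_sub (f x) (f 0)]

lemma integral_deriv_mul_rpow_mul_exp_neg_mul {f : ℝ → ℝ} {C r α : ℝ} (hr : 0 < r) (hα : 0 < α)
    (hf : Differentiable ℝ f) (hf' : ∀ x, |deriv f x| ≤ C) :
    ∫ x in Ioi 0, deriv f x * (x ^ r * exp (-(α * x)))
      = ∫ x in Ioi 0, (α * x - r) * f x * (x ^ (r - 1) * exp (-(α * x))) := by
  have hgrowth : ∀ x > 0, |f x| ≤ |f 0| + C * x := fun x hx => by
    simpa only [abs_of_pos hx] using abs_le_abs_add_mul_of_abs_deriv_le hf hf' x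
  have hfm : AEStronglyMeasurable f (volume.restrict (Ioi 0)) :=
    hf.continuous.aestronglyMeasurable
  have huv' : IntegrableOn (fun x => f x * (r * (x ^ (r - 1) * exp (-(α * x)))
      - α * (x ^ r * exp (-(α * x))))) (Ioi 0) := by
    refine (((integrableOn_mul_rpow_mul_exp_neg_mul (s := r - 1) hα (by linarith) hfm
      hgrowth).const_mul r).sub ((integrableOn_mul_rpow_mul_exp_neg_mul (s := r) hα (by linarith)
      hfm hgrowth).const_mul α)).congr (ae_of_all _ fun x => ?_)
    simp only [Pi.sub_apply]
    ring
  have hu'v : IntegrableOn (fun x => deriv f x * (x ^ r * exp (-(α * x)))) (Ioi 0) :=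
    integrableOn_mul_rpow_mul_exp_neg_mul (b := 0) hα (by linarith)
      (measurable_deriv f).aestronglyMeasurable (fun x _ => by simpa using hf' x)
  have h_zero : Tendsto (fun x => f x * (x ^ r * exp (-(α * x)))) (𝓝[>] 0) (𝓝 0) := by
    have hc : ContinuousAt (fun x => f x * (x ^ r * exp (-(α * x)))) 0 :=
      hf.continuous.continuousAt.mul
        ((continuousAt_rpow_const 0 r (Or.inr hr.le)).mul (by fun_prop))
    simpa [zero_rpow hr.ne'] using hc.tendsto.mono_left nhdsWithin_le_nhds
  have h_infty := tendsto_mul_rpow_mul_exp_neg_mul_atTop (s := r) hα hgrowth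
  have hibp := integral_Ioi_mul_deriv_eq_deriv_mul (fun x _ => (hf x).hasDerivAt)
    (fun x hx => hasDerivAt_rpow_mul_exp_neg_mul hx) huv' hu'v h_zero h_infty
  calc ∫ x in Ioi 0, deriv f x * (x ^ r * exp (-(α * x)))
      = -∫ x in Ioi 0, f x * (r * (x ^ (r - 1) * exp (-(α * x)))
          - α * (x ^ r * exp (-(α * x)))) := by
        rw [hibp]; ring
    _ = ∫ x in Ioi 0, -(f x * (r * (x ^ (r - 1) * exp (-(α * x)))
          - α * (x ^ r * exp (-(α * x))))) :=
        (integral_neg _).symm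
    _ = _ := setIntegral_congr_fun measurableSet_Ioi fun x hx => by
        rw [show x ^ r = x ^ (r - 1) * x by rw [← rpow_add_one (ne_of_gt hx), sub_add_cancel]]
        ring

lemma integral_gammaMeasure {r α : ℝ} (hr : 0 < r) (hα : 0 < α) (g : ℝ → ℝ) :
    ∫ x, g x ∂gammaMeasure r α
      = α ^ r / Gamma r * ∫ x in Ioi 0, g x * (x ^ (r - 1) * exp (-(α * x))) := by
  have hpdf : gammaPDF r α = fun x => ((gammaPDFReal r α x).toNNReal : ℝ≥0∞) := rfl
  rw [gammaMeasure, hpdf,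
    integral_withDensity_eq_integral_smul (measurable_gammaPDFReal r α).real_toNNReal,
    ← integral_Ici_eq_integral_Ioi, ← integral_const_mul,
    ← setIntegral_eq_integral_of_forall_compl_eq_zero (s := Ici 0) fun x hx => ?_]
  · refine setIntegral_congr_fun measurableSet_Ici fun x hx => ?_
    rw [NNReal.smul_def, Real.coe_toNNReal _ (gammaPDFReal_nonneg hr hα x), gammaPDFReal,
      if_pos (mem_Ici.mp hx), smul_eq_mul]
    ring
  · rw [gammaPDFReal, if_neg (mt mem_Ici.mpr hx), Real.toNNReal_zero, zero_smul]

theorem stein_identity_gammaMeasure {f : ℝ → ℝ} {C r α : ℝ} (hr : 0 < r) (hα : 0 < α)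
    (hf : Differentiable ℝ f) (hf' : ∀ x, |deriv f x| ≤ C) :
    ∫ x, (α * x - r) * f x ∂gammaMeasure r α
      = r / α * ∫ x, deriv f x ∂gammaMeasure (r + 1) α := by
  rw [integral_gammaMeasure hr hα, integral_gammaMeasure (by linarith) hα, add_sub_cancel_right,
    integral_deriv_mul_rpow_mul_exp_neg_mul hr hα hf hf', rpow_add_one hα.ne',
    Gamma_add_one hr.ne']
  field_simp

lemma integral_id_gammaMeasure {r α : ℝ} (hr : 0 < r) (hα : 0 < α) :
    ∫ x, x ∂gammaMeasure r α = r / α := by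
  have hshift : ∫ x in Ioi 0, x * (x ^ (r - 1) * exp (-(α * x)))
      = ∫ x in Ioi 0, x ^ (r + 1 - 1) * exp (-(α * x)) :=
    setIntegral_congr_fun measurableSet_Ioi fun x hx => by
      rw [add_sub_cancel_right, show x ^ r = x ^ (r - 1) * x by
        rw [← rpow_add_one (ne_of_gt hx), sub_add_cancel]]
      ring
  rw [integral_gammaMeasure hr hα, hshift, integral_rpow_mul_exp_neg_mul_Ioi (by linarith) hα,
    Gamma_add_one hr.ne', div_rpow zero_le_one hα.le, one_rpow, rpow_add_one hα.ne']
  field_simp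

lemma integral_sub_sq_gammaMeasure {r α : ℝ} (hr : 0 < r) (hα : 0 < α) :
    ∫ x, (x - r / α) ^ 2 ∂gammaMeasure r α = r / α ^ 2 := by
  have := isProbabilityMeasure_gammaMeasure (by linarith : 0 < r + 1) hα
  have h := stein_identity_gammaMeasure (f := fun x => x - r / α) (C := 1) hr hα
    (by fun_prop) (by simp)
  simp only [deriv_sub_const, deriv_id'', integral_const, probReal_univ, smul_eq_mul,
    mul_one] at h
  have hsq : ∀ x, (α * x - r) * (x - r / α) = α * (x - r / α) ^ 2 := fun x => by
    field_simp
  simp only [hsq, integral_const_mul] at h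
  generalize ∫ x, (x - r / α) ^ 2 ∂gammaMeasure r α = V at h ⊢
  field_simp at h ⊢
  linear_combination h

/-- If `W ~ Gamma(r, α)` then its zero-biased distribution is `Gamma(r+1, α)`. -/
theorem gamma_zeroBiased (r α : ℝ) (hr : 0 < r) (hα : 0 < α) :
    IsZeroBiased (gammaMeasure r α) (gammaMeasure (r + 1) α) := by
  intro f hf hf'
  rw [integral_id_gammaMeasure hr hα, integral_sub_sq_gammaMeasure hr hα]
  calc ∫ x, (x - r / α) * f x ∂gammaMeasure r α
      = α⁻¹ * ∫ x, (α * x - r) * f x ∂gammaMeasure r α := by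
        rw [← integral_const_mul]
        congr with x
        field_simp
    _ = r / α ^ 2 * ∫ x, deriv f x ∂gammaMeasure (r + 1) α := by
        rw [stein_identity_gammaMeasure hr hα hf hf']
        field_simp
end
end

section
/- For 0 < r < 1 and Z ~ Gamma(r,α), for all δ > 0 and z ≥ 0, P(z < Z ≤ z+δ) ≤ α^r δ^r / Γ(r+1). -/
open MeasureTheory ProbabilityTheory Real

noncomputable section

/-- Subadditivity of `x ↦ x ^ r` for `0 ≤ r ≤ 1` on nonnegative reals. -/
lemma real_rpow_add_le_add_rpow {a b p : ℝ} (ha : 0 ≤ a) (hb : 0 ≤ b)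
    (hp : 0 ≤ p) (hp1 : p ≤ 1) : (a + b) ^ p ≤ a ^ p + b ^ p := by
  have h := NNReal.rpow_add_le_add_rpow a.toNNReal b.toNNReal hp hp1
  rw [← NNReal.coe_le_coe] at h
  push_cast at h
  simpa [Real.coe_toNNReal a ha, Real.coe_toNNReal b hb,
    max_eq_left (by linarith : (0:ℝ) ≤ a + b)] using h

/-- Concentration inequality for `Gamma(r,α)` with `0 < r < 1`:
`P(z < Z ≤ z+δ) ≤ α^r δ^r / Γ(r+1)`. -/
theorem gamma_concentration_of_lt_one (r α δ z : ℝ) (hr0 : 0 < r) (hr1 : r < 1)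
    (hα : 0 < α) (hδ : 0 < δ) (hz : 0 ≤ z) :
    gammaMeasure r α (Set.Ioc z (z + δ))
      ≤ ENNReal.ofReal (α ^ r * δ ^ r / Real.Gamma (r + 1)) := by
  have hΓ : 0 < Real.Gamma r := Real.Gamma_pos_of_pos hr0
  have hle : z ≤ z + δ := by linarith
  set c : ℝ := α ^ r / Real.Gamma r with hc
  have hc0 : 0 < c := div_pos (Real.rpow_pos_of_pos hα r) hΓ
  -- integrability of the bounding function on the interval
  have hint : IntegrableOn (fun x : ℝ => c * x ^ (r - 1)) (Set.Ioc z (z + δ)) volume := by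
    have := (intervalIntegral.intervalIntegrable_rpow' (a := z) (b := z + δ)
      (r := r - 1) (by linarith)).const_mul c
    rwa [intervalIntegrable_iff_integrableOn_Ioc_of_le hle] at this
  rw [gammaMeasure, withDensity_apply _ measurableSet_Ioc]
  calc ∫⁻ x in Set.Ioc z (z + δ), gammaPDF r α x
      ≤ ∫⁻ x in Set.Ioc z (z + δ), ENNReal.ofReal (c * x ^ (r - 1)) := by
        refine setLIntegral_mono (by fun_prop) fun x hx => ?_
        have hx0 : (0 : ℝ) ≤ x := le_trans hz hx.1.le
        rw [gammaPDF_of_nonneg hx0]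
        apply ENNReal.ofReal_le_ofReal
        have hexp : Real.exp (-(α * x)) ≤ 1 := by
          apply Real.exp_le_one_iff.mpr; nlinarith
        have hpow : (0:ℝ) ≤ x ^ (r - 1) := Real.rpow_nonneg hx0 _
        calc α ^ r / Real.Gamma r * x ^ (r - 1) * Real.exp (-(α * x))
            ≤ α ^ r / Real.Gamma r * x ^ (r - 1) * 1 := by
              apply mul_le_mul_of_nonneg_left hexp; positivity
          _ = c * x ^ (r - 1) := by ring
    _ = ENNReal.ofReal (∫ x in Set.Ioc z (z + δ), c * x ^ (r - 1)) := by
        rw [← ofReal_integral_eq_lintegral_ofReal hint]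
        filter_upwards [ae_restrict_mem measurableSet_Ioc] with x hx
        have hx0 : (0 : ℝ) ≤ x := le_trans hz hx.1.le
        have := Real.rpow_nonneg hx0 (r - 1)
        positivity
    _ ≤ ENNReal.ofReal (α ^ r * δ ^ r / Real.Gamma (r + 1)) := by
        apply ENNReal.ofReal_le_ofReal
        have hIoc : ∫ x in Set.Ioc z (z + δ), c * x ^ (r - 1)
            = c * (((z + δ) ^ r - z ^ r) / r) := by
          rw [← intervalIntegral.integral_of_le hle,
            intervalIntegral.integral_const_mul,
            integral_rpow (Or.inl (by linarith))]
          ring_nf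
        rw [hIoc, Real.Gamma_add_one (ne_of_gt hr0)]
        have hsub : (z + δ) ^ r - z ^ r ≤ δ ^ r := by
          have := real_rpow_add_le_add_rpow hz hδ.le hr0.le hr1.le
          linarith
        rw [hc]
        have heq : α ^ r / Real.Gamma r * (((z + δ) ^ r - z ^ r) / r)
            = α ^ r * ((z + δ) ^ r - z ^ r) / (r * Real.Gamma r) := by
          rw [div_mul_div_comm, mul_comm (Real.Gamma r) r]
        rw [heq]
        have hnum : α ^ r * ((z + δ) ^ r - z ^ r) ≤ α ^ r * δ ^ r :=
          mul_le_mul_of_nonneg_left hsub (Real.rpow_nonneg hα.le r)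
        exact div_le_div₀ (by positivity) hnum (by positivity) le_rfl
end
end

section
/- Suppose X is a nonnegative random variable with positive variance, X' is a nonnegative random variable independent of X with 0 < E X' < ∞, and the size-biased distribution of X equals the distribution of X + X'. Then the zero-biased distribution of X equals the distribution of X + X'', where X'' is independent of X with density f(x) = P(X' ≥ x)/E[X'] for x ≥ 0. -/
open MeasureTheory ProbabilityTheory Real

noncomputable section

/-!
Write `m = E X` and `c = E X'`. Testing the size-bias identity against `f(x) = x` (it extends
from bounded to integrable test functions by truncation) gives `E X² = m (m + c)`, so `σ² = m c`.
For `f` with `|f'| ≤ 1`, size biasing gives `E[(X - m) f(X)] = m E[f(X + X') - f(X)]`. Writing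
`f(x + y) - f(x) = ∫₀^y f'(x + t) dt` and exchanging the order of integration turns
`E[f(x + X') - f(x)]` into `∫₀^∞ P(X' ≥ t) f'(x + t) dt = c E[f'(x + X'')]`. Hence
`E[(X - m) f(X)] = m c E[f'(X + X'')] = σ² E[f'(X + X'')]`.
-/

open Set Filter Topology

section Convolution

variable {μ ν : Measure ℝ}

lemma MeasureTheory.Integrable.comp_add_prod [SFinite μ] [SFinite ν] {f : ℝ → ℝ}
    (hf : Integrable f (μ ∗ ν)) : Integrable (fun p : ℝ × ℝ => f (p.1 + p.2)) (μ.prod ν) :=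
  (integrable_map_measure hf.1 (by fun_prop)).mp hf

lemma integrable_id_conv [IsFiniteMeasure μ] [IsFiniteMeasure ν] (hμ : Integrable id μ)
    (hν : Integrable id ν) : Integrable id (μ ∗ ν) :=
  (integrable_map_measure aestronglyMeasurable_id (by fun_prop)).mpr
    ((hμ.comp_fst ν).add (hν.comp_snd μ))

lemma integral_id_conv [IsProbabilityMeasure μ] [IsProbabilityMeasure ν] (hμ : Integrable id μ)
    (hν : Integrable id ν) : ∫ x, x ∂(μ ∗ ν) = ∫ x, x ∂μ + ∫ x, x ∂ν := by
  have hinner : ∀ x, ∫ y, x + y ∂ν = x + ∫ y, y ∂ν := fun x => by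
    rw [integral_add (g := fun y => y) (integrable_const x) hν, integral_const, probReal_univ,
      one_smul]
  rw [integral_conv (f := fun x => x) (integrable_id_conv hμ hν)]
  simp only [hinner]
  rw [integral_add (f := fun x => x) hμ (integrable_const _), integral_const, probReal_univ,
    one_smul]

lemma integral_conv_sub_integral [SFinite μ] [IsProbabilityMeasure ν] {f : ℝ → ℝ}
    (hfc : Integrable f (μ ∗ ν)) (hf : Integrable f μ) :
    ∫ x, f x ∂(μ ∗ ν) - ∫ x, f x ∂μ = ∫ x, ∫ y, (f (x + y) - f x) ∂ν ∂μ := by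
  have hprod := hfc.comp_add_prod
  rw [integral_conv hfc, ← integral_sub hprod.integral_prod_left hf]
  refine integral_congr_ae ?_
  filter_upwards [hprod.prod_right_ae] with x hx
  rw [integral_sub hx (integrable_const _), integral_const, probReal_univ, one_smul]

end Convolution

lemma LipschitzWith.memLp_of_memLp_id {E F : Type*} [NormedAddCommGroup E]
    [NormedAddCommGroup F] [MeasurableSpace E] {μ : Measure E} [IsFiniteMeasure μ] {K : NNReal}
    {f : E → F} {p : ENNReal} (hf : LipschitzWith K f) (h : MemLp id p μ) : MemLp f p μ := by
  have hf₀ : LipschitzWith K fun x => f x - f 0 :=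
    LipschitzWith.of_dist_le_mul fun x y => by simpa [dist_sub_right] using hf.dist_le_mul x y
  convert (hf₀.comp_memLp (sub_self _) h).add (memLp_const (f 0)) using 1
  ext x
  simp

section Clip

def clip (c y : ℝ) : ℝ := max (-c) (min y c)

lemma continuous_clip (c : ℝ) : Continuous (clip c) := by
  unfold clip
  fun_prop

lemma abs_clip_le {c : ℝ} (hc : 0 ≤ c) (y : ℝ) : |clip c y| ≤ c :=
  abs_le.2 ⟨le_max_left _ _, max_le (by linarith) (min_le_right _ _)⟩

lemma abs_clip_le_abs {c : ℝ} (hc : 0 ≤ c) (y : ℝ) : |clip c y| ≤ |y| := by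
  rcases le_total |y| c with h | h
  · rw [clip, min_eq_left (abs_le.1 h).2, max_eq_right (abs_le.1 h).1]
  · exact (abs_clip_le hc y).trans h

lemma tendsto_clip (y : ℝ) : Tendsto (fun n : ℕ => clip n y) atTop (𝓝 y) := by
  refine tendsto_const_nhds.congr' ?_
  filter_upwards [eventually_ge_atTop ⌈|y|⌉₊] with n hn
  have h := abs_le.1 ((Nat.le_ceil |y|).trans (Nat.cast_le.2 hn))
  rw [clip, min_eq_left h.2, max_eq_right h.1]

lemma tendsto_integral_mul_clip {α : Type*} [MeasurableSpace α] {μ : Measure α} {w f : α → ℝ}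
    (hw : AEStronglyMeasurable w μ) (hf : AEStronglyMeasurable f μ)
    (h : Integrable (fun x => w x * f x) μ) :
    Tendsto (fun n : ℕ => ∫ x, w x * clip n (f x) ∂μ) atTop (𝓝 (∫ x, w x * f x ∂μ)) := by
  refine tendsto_integral_of_dominated_convergence (fun x => |w x * f x|)
    (fun n => hw.mul ((continuous_clip n).comp_aestronglyMeasurable hf)) h.abs
    (fun n => ae_of_all _ fun x => ?_) (ae_of_all _ fun x => (tendsto_clip (f x)).const_mul _)
  rw [norm_eq_abs, abs_mul, abs_mul]
  exact mul_le_mul_of_nonneg_left (abs_clip_le_abs n.cast_nonneg _) (abs_nonneg _)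

end Clip

section SizeBias

variable {μ ν : Measure ℝ} {f : ℝ → ℝ}

lemma IsSizeBiased.integral_mul_eq_of_abs_le (hsb : IsSizeBiased μ ν) (hf : Measurable f)
    {C : ℝ} (hC : ∀ x, |f x| ≤ C) :
    ∫ x, x * f x ∂μ = (∫ x, x ∂μ) * ∫ x, f x ∂ν := by
  have hC₁ : 0 < C + 1 := by linarith [hC 0, abs_nonneg (f 0)]
  have h := hsb (fun x => f x / (C + 1)) (hf.div_const _) fun x => by
    rw [abs_div, abs_of_pos hC₁, div_le_one hC₁]
    linarith [hC x]
  simp only [mul_div_assoc', integral_div] at h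
  field_simp at h
  exact h

lemma IsSizeBiased.integral_mul_eq (hsb : IsSizeBiased μ ν) (hf : Measurable f)
    (hμ : Integrable (fun x => x * f x) μ) (hν : Integrable f ν) :
    ∫ x, x * f x ∂μ = (∫ x, x ∂μ) * ∫ x, f x ∂ν := by
  have hclip : ∀ n : ℕ, ∫ x, x * clip n (f x) ∂μ = (∫ x, x ∂μ) * ∫ x, clip n (f x) ∂ν :=
    fun n => hsb.integral_mul_eq_of_abs_le ((continuous_clip n).measurable.comp hf)
      (abs_clip_le n.cast_nonneg <| f ·)
  have hlimν := tendsto_integral_mul_clip (w := fun _ => 1) aestronglyMeasurable_const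
    hf.aestronglyMeasurable (by simpa using hν)
  simp only [one_mul] at hlimν
  refine tendsto_nhds_unique ?_ (hlimν.const_mul (∫ x, x ∂μ))
  simpa only [hclip] using tendsto_integral_mul_clip (w := fun x => x)
    aestronglyMeasurable_id hf.aestronglyMeasurable hμ

lemma IsSizeBiased.integral_sub_integral_sq_eq_of_conv [IsProbabilityMeasure μ]
    [IsProbabilityMeasure ν] (hsb : IsSizeBiased μ (μ ∗ ν)) (hμ : MemLp id 2 μ)
    (hν : Integrable id ν) :
    ∫ x, (x - ∫ y, y ∂μ) ^ 2 ∂μ = (∫ x, x ∂μ) * ∫ x, x ∂ν := by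
  have hμ₁ : Integrable id μ := hμ.integrable one_le_two
  have hsq : ∫ x, x * x ∂μ = (∫ x, x ∂μ) * (∫ x, x ∂μ + ∫ x, x ∂ν) := by
    rw [hsb.integral_mul_eq (f := fun x => x) measurable_id (hμ.integrable_mul hμ)
      (integrable_id_conv hμ₁ hν), integral_id_conv hμ₁ hν]
  have hvar := variance_eq_sub hμ
  rw [variance_eq_integral aemeasurable_id] at hvar
  simp only [id, Pi.pow_apply, sq] at hvar ⊢
  rw [hvar, hsq]
  ring

end SizeBias

section Equilibrium

variable {ν : Measure ℝ}

def equilibriumMeasure (ν : Measure ℝ) : Measure ℝ :=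
  volume.withDensity fun x =>
    ENNReal.ofReal (if 0 ≤ x then (ν (Ici x)).toReal / ∫ y, y ∂ν else 0)

lemma measurable_measure_Ici : Measurable fun t => ν (Ici t) :=
  Antitone.measurable fun _ _ hst => measure_mono (Ici_subset_Ici.2 hst)

lemma ae_nonneg_of_measure_Iio_eq_zero (hν₀ : ν (Iio 0) = 0) : 0 ≤ᵐ[ν] id :=
  ae_iff.2 (by simp only [Pi.zero_apply, id, not_le]; exact hν₀)

lemma lintegral_measure_Ici_eq_ofReal_integral (hν₀ : ν (Iio 0) = 0) (hν : Integrable id ν) :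
    ∫⁻ t in Ioi 0, ν (Ici t) = ENNReal.ofReal (∫ y, y ∂ν) := by
  have hnn := ae_nonneg_of_measure_Iio_eq_zero hν₀
  rw [ofReal_integral_eq_lintegral_ofReal (f := fun y => y) hν hnn]
  exact (lintegral_eq_lintegral_meas_le ν hnn hν.aemeasurable).symm

lemma isProbabilityMeasure_equilibriumMeasure [IsFiniteMeasure ν] (hν₀ : ν (Iio 0) = 0)
    (hν : Integrable id ν) (hc : 0 < ∫ y, y ∂ν) : IsProbabilityMeasure (equilibriumMeasure ν) := by
  have hc' : ENNReal.ofReal (∫ y, y ∂ν) ≠ 0 := (ENNReal.ofReal_pos.2 hc).ne'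
  have hdensity :
      (fun x => ENNReal.ofReal (if 0 ≤ x then (ν (Ici x)).toReal / ∫ y, y ∂ν else 0))
      = (Ici 0).indicator fun x => ν (Ici x) * (ENNReal.ofReal (∫ y, y ∂ν))⁻¹ := by
    ext x
    by_cases hx : 0 ≤ x
    · rw [if_pos hx, indicator_of_mem (mem_Ici.2 hx), ENNReal.ofReal_div_of_pos hc,
        ENNReal.ofReal_toReal (measure_ne_top _ _), div_eq_mul_inv]
    · simp [hx]
  constructor
  rw [equilibriumMeasure, withDensity_apply _ MeasurableSet.univ, Measure.restrict_univ,
    hdensity, lintegral_indicator measurableSet_Ici, ← setLIntegral_congr Ioi_ae_eq_Ici,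
    lintegral_mul_const' _ _ (ENNReal.inv_ne_top.2 hc'),
    lintegral_measure_Ici_eq_ofReal_integral hν₀ hν,
    ENNReal.mul_inv_cancel hc' ENNReal.ofReal_ne_top]

lemma integral_equilibriumMeasure (hc : 0 ≤ ∫ y, y ∂ν) (h : ℝ → ℝ) :
    ∫ t, h t ∂(equilibriumMeasure ν) = ∫ t in Ioi 0, ν.real (Ici t) / (∫ y, y ∂ν) * h t := by
  have hmeas : Measurable fun x =>
      ENNReal.ofReal (if 0 ≤ x then (ν (Ici x)).toReal / ∫ y, y ∂ν else 0) :=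
    ENNReal.measurable_ofReal.comp <| Measurable.ite measurableSet_Ici
      (measurable_measure_Ici.ennreal_toReal.div_const _) measurable_const
  rw [equilibriumMeasure, integral_withDensity_eq_integral_toReal_smul hmeas
    (ae_of_all _ fun _ => ENNReal.ofReal_lt_top), ← integral_Ici_eq_integral_Ioi,
    ← integral_indicator measurableSet_Ici]
  congr 1 with t
  by_cases ht : 0 ≤ t
  · simp [ht, measureReal_def, ENNReal.toReal_ofReal, div_nonneg, hc]
  · simp [ht]

end Equilibrium

section Tail

variable {ν : Measure ℝ}

lemma integral_setIntegral_Ioc_eq_setIntegral_Ioi_mul [SFinite ν] {h : ℝ → ℝ}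
    (hh : Measurable h) {C : ℝ} (hC : ∀ t, |h t| ≤ C) (hν : Integrable id ν) :
    ∫ y, (∫ t in Ioc 0 y, h t) ∂ν = ∫ t in Ioi 0, ν.real (Ici t) * h t := by
  set S : Set (ℝ × ℝ) := {p | 0 < p.2 ∧ p.2 ≤ p.1}
  have hS : MeasurableSet S :=
    (measurableSet_lt measurable_const measurable_snd).inter
      (measurableSet_le measurable_snd measurable_fst)
  have hS_lt_top : ν.prod volume S < ⊤ := by
    have hslice : ∀ y, Prod.mk y ⁻¹' S = Ioc 0 y := fun _ => rfl
    rw [Measure.prod_apply hS]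
    calc ∫⁻ y, volume (Prod.mk y ⁻¹' S) ∂ν = ∫⁻ y, ENNReal.ofReal (id y) ∂ν := by
          simp only [hslice, Real.volume_Ioc, sub_zero, id]
      _ < ⊤ := hν.lintegral_lt_top
  have hint : Integrable (S.indicator fun p => h p.2) (ν.prod volume) :=
    (integrable_indicator_iff hS).2 <| IntegrableOn.of_bound hS_lt_top
      (hh.comp measurable_snd).aestronglyMeasurable C (ae_of_all _ fun p => hC p.2)
  calc ∫ y, (∫ t in Ioc 0 y, h t) ∂ν
        = ∫ y, (∫ t, S.indicator (fun p => h p.2) (y, t)) ∂ν := by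
        refine integral_congr_ae (ae_of_all _ fun y => ?_)
        exact (integral_indicator measurableSet_Ioc).symm
    _ = ∫ t, ∫ y, S.indicator (fun p => h p.2) (y, t) ∂ν := integral_integral_swap
          (f := fun y t => S.indicator (fun p => h p.2) (y, t)) hint
    _ = ∫ t in Ioi 0, ν.real (Ici t) * h t := by
        rw [← integral_indicator measurableSet_Ioi]
        congr 1 with t
        by_cases ht : 0 < t
        · have hslice : (fun y => S.indicator (fun p => h p.2) (y, t))
              = (Ici t).indicator fun _ => h t := by
            ext y
            simp [S, indicator_apply, ht]
          rw [hslice, integral_indicator_const _ measurableSet_Ici,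
            indicator_of_mem (mem_Ioi.2 ht), smul_eq_mul]
        · simp [S, ht]

lemma integral_sub_apply_zero_eq_setIntegral_Ioi_mul_deriv [SFinite ν] (hν₀ : ν (Iio 0) = 0)
    (hν : Integrable id ν) {g : ℝ → ℝ} (hg : Differentiable ℝ g) {C : ℝ}
    (hg' : ∀ x, |deriv g x| ≤ C) :
    ∫ y, (g y - g 0) ∂ν = ∫ t in Ioi 0, ν.real (Ici t) * deriv g t := by
  rw [← integral_setIntegral_Ioc_eq_setIntegral_Ioi_mul (measurable_deriv g) hg' hν]
  refine integral_congr_ae ?_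
  filter_upwards [ae_nonneg_of_measure_Iio_eq_zero hν₀] with y (hy : 0 ≤ y)
  have hint : IntervalIntegrable (deriv g) volume 0 y :=
    (intervalIntegrable_const (c := C)).mono_fun (measurable_deriv g).aestronglyMeasurable
      (ae_of_all _ fun t => (hg' t).trans (le_abs_self C))
  rw [← intervalIntegral.integral_of_le hy,
    intervalIntegral.integral_deriv_eq_sub (fun x _ => hg x) hint]

lemma integral_sub_apply_zero_eq_mul_integral_deriv [SFinite ν] (hν₀ : ν (Iio 0) = 0)
    (hν : Integrable id ν) (hc : 0 < ∫ y, y ∂ν) {g : ℝ → ℝ} (hg : Differentiable ℝ g) {C : ℝ}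
    (hg' : ∀ x, |deriv g x| ≤ C) :
    ∫ y, (g y - g 0) ∂ν = (∫ y, y ∂ν) * ∫ t, deriv g t ∂(equilibriumMeasure ν) := by
  rw [integral_sub_apply_zero_eq_setIntegral_Ioi_mul_deriv hν₀ hν hg hg',
    integral_equilibriumMeasure hc.le, ← integral_const_mul]
  congr 1 with t
  field_simp

end Tail

theorem zeroBiased_of_sizeBiased_conv_general (μ μ' : Measure ℝ)
    [IsProbabilityMeasure μ] [IsProbabilityMeasure μ']
    (hμ'0 : μ' (Set.Iio 0) = 0)
    (hL2 : MemLp id 2 μ)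
    (hμ'int : Integrable id μ') (hμ'mean : 0 < ∫ x, x ∂μ')
    (hsb : IsSizeBiased μ (Measure.conv μ μ')) :
    IsZeroBiased μ
      (Measure.conv μ (volume.withDensity fun x =>
        ENNReal.ofReal (if 0 ≤ x then (μ' (Set.Ici x)).toReal / ∫ y, y ∂μ' else 0))) := by
  change IsZeroBiased μ (μ ∗ equilibriumMeasure μ')
  intro f hf hf'
  have := isProbabilityMeasure_equilibriumMeasure hμ'0 hμ'int hμ'mean
  have hlip : LipschitzWith 1 f := lipschitzWith_of_nnnorm_deriv_le hf fun x => by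
    simpa [← NNReal.coe_le_coe] using hf' x
  have hfμ : MemLp f 2 μ := hlip.memLp_of_memLp_id hL2
  have hfμ₁ : Integrable f μ := hfμ.integrable one_le_two
  have hxf : Integrable (fun x => x * f x) μ := hL2.integrable_mul hfμ
  have hfconv : Integrable f (μ ∗ μ') :=
    memLp_one_iff_integrable.1 <| hlip.memLp_of_memLp_id <|
      memLp_one_iff_integrable.2 (integrable_id_conv (hL2.integrable one_le_two) hμ'int)
  have hderiv : Integrable (deriv f) (μ ∗ equilibriumMeasure μ') :=
    .of_bound (measurable_deriv f).aestronglyMeasurable 1 (ae_of_all _ hf')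
  have hshift (x : ℝ) : ∫ y, (f (x + y) - f x) ∂μ'
      = (∫ y, y ∂μ') * ∫ t, deriv f (x + t) ∂(equilibriumMeasure μ') := by
    simpa [deriv_comp_const_add] using
      integral_sub_apply_zero_eq_mul_integral_deriv hμ'0 hμ'int hμ'mean
        (g := fun t => f (x + t)) (hf.comp (differentiable_id.const_add x))
        fun t => by simpa [deriv_comp_const_add] using hf' (x + t)
  calc ∫ x, (x - ∫ y, y ∂μ) * f x ∂μ
      = ∫ x, x * f x ∂μ - (∫ y, y ∂μ) * ∫ x, f x ∂μ := by
        rw [← integral_const_mul, ← integral_sub hxf (hfμ₁.const_mul _)]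
        simp only [sub_mul]
    _ = (∫ y, y ∂μ) * (∫ x, f x ∂(μ ∗ μ') - ∫ x, f x ∂μ) := by
        rw [hsb.integral_mul_eq hf.continuous.measurable hxf hfconv, mul_sub]
    _ = (∫ y, y ∂μ) * ((∫ y, y ∂μ') *
          ∫ x, ∫ t, deriv f (x + t) ∂equilibriumMeasure μ' ∂μ) := by
        simp only [integral_conv_sub_integral hfconv hfμ₁, hshift, integral_const_mul]
    _ = (∫ x, (x - ∫ y, y ∂μ) ^ 2 ∂μ) * ∫ x, deriv f x ∂(μ ∗ equilibriumMeasure μ') := by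
        rw [hsb.integral_sub_integral_sq_eq_of_conv hL2 hμ'int, integral_conv hderiv, mul_assoc]

/-- If the size-biased distribution of a nonnegative `X` equals the law of `X + X'` with
`X'` nonnegative and independent of `X`, then the zero-biased distribution of `X` equals
the law of `X + X''` where `X''` is independent of `X` with density
`x ↦ P(X' ≥ x)/E[X']` on `[0,∞)`. -/
theorem zeroBiased_of_sizeBiased_conv (μ μ' : Measure ℝ)
    [IsProbabilityMeasure μ] [IsProbabilityMeasure μ']
    (hμ0 : μ (Set.Iio 0) = 0) (hμ'0 : μ' (Set.Iio 0) = 0)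
    (hL2 : MemLp id 2 μ) (hvar : 0 < ∫ x, (x - ∫ y, y ∂μ) ^ 2 ∂μ)
    (hμ'int : Integrable id μ') (hμ'mean : 0 < ∫ x, x ∂μ')
    (hsb : IsSizeBiased μ (Measure.conv μ μ')) :
    IsZeroBiased μ
      (Measure.conv μ (volume.withDensity fun x =>
        ENNReal.ofReal (if 0 ≤ x then (μ' (Set.Ici x)).toReal / ∫ y, y ∂μ' else 0))) :=
  zeroBiased_of_sizeBiased_conv_general μ μ' hμ'0 hL2 hμ'int hμ'mean hsb
end
end

section
/- Let W = X₁ + ⋯ + X_n be a sum of independent random variables with positive finite variances. Let I₂ be a random index with P(I₂ = i) = Var(X_i)/Var(W) and set W^z = Σ_{j≠I₂} X_j + X_{I₂}^z where X_i^z is an independent zero-biased copy of X_i. Then W^z has the zero-biased distribution of W. -/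
open MeasureTheory ProbabilityTheory Real

noncomputable section

/-!
With `Sᵢ = W - Xᵢ`, linearity gives `E[(W - EW) f(W)] = ∑ᵢ E[(Xᵢ - EXᵢ) f(Sᵢ + Xᵢ)]`.
Since `Sᵢ` is independent of `Xᵢ`, the `i`-th term is an iterated integral, and the zero-bias
identity of `Xᵢ` applied to the translates `f(s + ·)` turns it into `Var Xᵢ · E f'(Sᵢ + Xᵢᶻ)`,
the integral of `f'` against `law Sᵢ ∗ νᵢ`. As `Var W = ∑ᵢ Var Xᵢ`, the sum is `Var W` times the
integral of `f'` against the mixture with weights `Var Xᵢ / Var W`.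
-/

section TestFunction

variable {f : ℝ → ℝ}

lemma lipschitzWith_one_of_abs_deriv_le_one (hf : Differentiable ℝ f)
    (hf' : ∀ x, |deriv f x| ≤ 1) : LipschitzWith 1 f :=
  lipschitzWith_of_nnnorm_deriv_le hf fun x => by
    rw [← NNReal.coe_le_coe]; simpa using hf' x

lemma integrable_deriv_of_abs_deriv_le_one {μ : Measure ℝ} [IsFiniteMeasure μ]
    (hf' : ∀ x, |deriv f x| ≤ 1) : Integrable (deriv f) μ :=
  .of_bound (measurable_deriv f).aestronglyMeasurable 1 (ae_of_all _ hf')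

end TestFunction

lemma LipschitzWith.comp_memLp_of_isFiniteMeasure {α E F : Type*} [MeasurableSpace α]
    {μ : Measure α} [IsFiniteMeasure μ] [NormedAddCommGroup E] [NormedAddCommGroup F]
    {p : ENNReal} {K : NNReal} {g : E → F} {W : α → E} (hg : LipschitzWith K g)
    (hW : MemLp W p μ) : MemLp (fun x => g (W x)) p μ := by
  have h := (hg.sub (LipschitzWith.const (g 0))).comp_memLp (by simp) hW
  convert h.add (memLp_const (g 0)) using 1
  ext x
  simp

lemma integral_finsetSum_ofReal_smul_measure {α ι : Type*} [MeasurableSpace α] (s : Finset ι)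
    {c : ι → ℝ} (hc : ∀ i ∈ s, 0 ≤ c i) {μ : ι → Measure α} {g : α → ℝ}
    (hg : ∀ i ∈ s, Integrable g (μ i)) :
    ∫ x, g x ∂(∑ i ∈ s, ENNReal.ofReal (c i) • μ i) = ∑ i ∈ s, c i * ∫ x, g x ∂μ i := by
  rw [integral_finsetSum_measure fun i hi => (hg i hi).smul_measure ENNReal.ofReal_ne_top]
  refine Finset.sum_congr rfl fun i hi => ?_
  rw [integral_smul_measure, ENNReal.toReal_ofReal (hc i hi), smul_eq_mul]

lemma mul_div_sum_cancel_of_nonneg {ι : Type*} {s : Finset ι} {a : ι → ℝ}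
    (ha : ∀ j ∈ s, 0 ≤ a j) {i : ι} (hi : i ∈ s) :
    (∑ j ∈ s, a j) * (a i / ∑ j ∈ s, a j) = a i := by
  rcases eq_or_ne (∑ j ∈ s, a j) 0 with h0 | hne
  · have hai : a i = 0 := le_antisymm (h0 ▸ Finset.single_le_sum ha hi) (ha i hi)
    simp [hai]
  · exact mul_div_cancel₀ _ hne

lemma IsZeroBiased.integral_integral_mul_comp_add {μ ρ ν : Measure ℝ} [IsProbabilityMeasure μ]
    [IsProbabilityMeasure ν] (h : IsZeroBiased ρ ν) {f : ℝ → ℝ} (hf : Differentiable ℝ f)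
    (hf' : ∀ x, |deriv f x| ≤ 1) :
    ∫ x, ∫ y, (y - ∫ z, z ∂ρ) * f (x + y) ∂ρ ∂μ
      = (∫ y, (y - ∫ z, z ∂ρ) ^ 2 ∂ρ) * ∫ x, deriv f x ∂(μ ∗ ν) := by
  have htranslate : ∀ x, ∫ y, (y - ∫ z, z ∂ρ) * f (x + y) ∂ρ
      = (∫ y, (y - ∫ z, z ∂ρ) ^ 2 ∂ρ) * ∫ y, deriv f (x + y) ∂ν := fun x => by
    simpa only [deriv_comp_const_add] using
      h (fun y => f (x + y)) (hf.comp (differentiable_id.const_add x))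
        fun y => by simpa only [deriv_comp_const_add] using hf' (x + y)
  simp_rw [htranslate, integral_const_mul,
    integral_conv (integrable_deriv_of_abs_deriv_le_one hf')]

section Probability

variable {Ω : Type*} [MeasurableSpace Ω] {P : Measure Ω}

lemma integral_id_map {B : Ω → ℝ} (hB : AEMeasurable B P) :
    ∫ y, y ∂(P.map B) = ∫ ω, B ω ∂P :=
  integral_map hB aestronglyMeasurable_id

lemma integral_map_sub_integral_mul {B : Ω → ℝ} (hB : AEMeasurable B P) {g : ℝ → ℝ}
    (hg : Continuous g) :
    ∫ x, (x - ∫ y, y ∂(P.map B)) * g x ∂(P.map B) = ∫ ω, (B ω - ∫ ω', B ω' ∂P) * g (B ω) ∂P := by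
  rw [integral_id_map hB, integral_map hB (by fun_prop)]

lemma integral_map_sub_integral_sq [IsProbabilityMeasure P] {B : Ω → ℝ} (hB : AEMeasurable B P) :
    ∫ x, (x - ∫ y, y ∂(P.map B)) ^ 2 ∂(P.map B) = variance B P := by
  rw [← variance_id_map hB, variance_eq_integral measurable_id.aemeasurable]
  rfl

lemma ProbabilityTheory.IndepFun.integral_comp_eq_integral_integral [IsFiniteMeasure P]
    {α β : Type*} [MeasurableSpace α] [MeasurableSpace β] {A : Ω → α} {B : Ω → β}
    (hAB : IndepFun A B P) (hA : AEMeasurable A P) (hB : AEMeasurable B P) {F : α × β → ℝ} (hF : Measurable F)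
    (hFint : Integrable (fun ω => F (A ω, B ω)) P) :
    ∫ ω, F (A ω, B ω) ∂P = ∫ x, ∫ y, F (x, y) ∂(P.map B) ∂(P.map A) := by
  have hlaw := (indepFun_iff_map_prod_eq_prod_map_map hA hB).mp hAB
  have hAB' : AEMeasurable (fun ω => (A ω, B ω)) P := hA.prodMk hB
  rw [← integral_map hAB' hF.aestronglyMeasurable, hlaw]
  refine integral_prod F ?_
  rwa [← hlaw, integrable_map_measure hF.aestronglyMeasurable hAB']

lemma integral_sum_sub_integral_mul [IsFiniteMeasure P] {ι : Type*} (s : Finset ι)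
    {X : ι → Ω → ℝ} (hX : ∀ i ∈ s, MemLp (X i) 2 P) {g : Ω → ℝ} (hg : MemLp g 2 P) :
    ∫ ω, (∑ i ∈ s, X i ω - ∫ ω', ∑ i ∈ s, X i ω' ∂P) * g ω ∂P
      = ∑ i ∈ s, ∫ ω, (X i ω - ∫ ω', X i ω' ∂P) * g ω ∂P := by
  rw [integral_finsetSum s fun i hi => (hX i hi).integrable one_le_two]
  simp_rw [← Finset.sum_sub_distrib, Finset.sum_mul]
  exact integral_finsetSum s fun i hi =>
    ((hX i hi).sub (memLp_const _)).integrable_mul hg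

lemma integral_sub_integral_mul_comp_add_of_indepFun [IsProbabilityMeasure P] {A B : Ω → ℝ}
    (hAB : IndepFun A B P) (hA : Measurable A) (hB : Measurable B) (hA2 : MemLp A 2 P)
    (hB2 : MemLp B 2 P) {ν : Measure ℝ} [IsProbabilityMeasure ν]
    (hν : IsZeroBiased (P.map B) ν) {f : ℝ → ℝ} (hf : Differentiable ℝ f)
    (hf' : ∀ x, |deriv f x| ≤ 1) :
    ∫ ω, (B ω - ∫ ω', B ω' ∂P) * f (A ω + B ω) ∂P
      = variance B P * ∫ x, deriv f x ∂(P.map A ∗ ν) := by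
  have : IsProbabilityMeasure (P.map A) := Measure.isProbabilityMeasure_map hA.aemeasurable
  rw [← integral_map_sub_integral_sq hB.aemeasurable,
    ← hν.integral_integral_mul_comp_add hf hf', integral_id_map hB.aemeasurable]
  refine hAB.integral_comp_eq_integral_integral hA.aemeasurable hB.aemeasurable
    (F := fun p => (p.2 - ∫ ω, B ω ∂P) * f (p.1 + p.2))
    (by have := hf.continuous.measurable; fun_prop) ?_
  exact (hB2.sub (memLp_const _)).integrable_mul
    ((lipschitzWith_one_of_abs_deriv_le_one hf hf').comp_memLp_of_isFiniteMeasure (hA2.add hB2))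

end Probability

theorem zeroBiased_sum_indep_general {Ω : Type*} [MeasurableSpace Ω] (P : Measure Ω)
    [IsProbabilityMeasure P] (n : ℕ) (X : Fin n → Ω → ℝ)
    (hmeas : ∀ i, Measurable (X i))
    (hindep : iIndepFun X P)
    (hL2 : ∀ i, MemLp (X i) 2 P)
    (ν : Fin n → Measure ℝ) (hνprob : ∀ i, IsProbabilityMeasure (ν i))
    (hν : ∀ i, IsZeroBiased (Measure.map (X i) P) (ν i)) :
    IsZeroBiased (Measure.map (fun ω => ∑ i, X i ω) P)
      (∑ i : Fin n,
        ENNReal.ofReal (variance (X i) P / variance (fun ω => ∑ j, X j ω) P) •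
          (Measure.conv (Measure.map (fun ω => ∑ j ∈ Finset.univ.erase i, X j ω) P) (ν i))) := by
  intro f hf hf'
  have hW : Measurable fun ω => ∑ i, X i ω := by fun_prop
  have hWL2 : MemLp (fun ω => ∑ i, X i ω) 2 P := memLp_finsetSum _ fun i _ => hL2 i
  have hvarW : variance (fun ω => ∑ i, X i ω) P = ∑ i, variance (X i) P := by
    simpa only [← Finset.sum_apply] using IndepFun.variance_sum (fun i _ => hL2 i)
      fun i _ j _ hij => hindep.indepFun hij
  have hcoord (i : Fin n) : ∫ ω, (X i ω - ∫ ω', X i ω' ∂P) * f (∑ j, X j ω) ∂P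
      = variance (X i) P
        * ∫ x, deriv f x ∂(P.map (fun ω => ∑ j ∈ Finset.univ.erase i, X j ω) ∗ ν i) := by
    simp_rw [← Finset.sum_erase_add _ _ (Finset.mem_univ i)]
    exact integral_sub_integral_mul_comp_add_of_indepFun
      (by simpa only [← Finset.sum_apply] using
        hindep.indepFun_finsetSum_of_notMem hmeas (Finset.notMem_erase i Finset.univ))
      (by fun_prop) (hmeas i) (memLp_finsetSum _ fun j _ => hL2 j) (hL2 i) (hν i) hf hf'
  rw [integral_map_sub_integral_mul hW.aemeasurable hf.continuous,
    integral_sum_sub_integral_mul _ (fun i _ => hL2 i)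
      ((lipschitzWith_one_of_abs_deriv_le_one hf hf').comp_memLp_of_isFiniteMeasure hWL2),
    integral_map_sub_integral_sq hW.aemeasurable,
    integral_finsetSum_ofReal_smul_measure _ (fun i _ => div_nonneg (variance_nonneg _ _)
      (variance_nonneg _ _)) fun i _ => integrable_deriv_of_abs_deriv_le_one hf',
    hvarW, Finset.mul_sum]
  refine Finset.sum_congr rfl fun i hi => ?_
  rw [hcoord i, ← mul_assoc, mul_div_sum_cancel_of_nonneg (fun j _ => variance_nonneg _ _) hi]

/-- Zero biasing a sum of independent random variables: replace a coordinate, chosen with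
probability proportional to its variance, by an independent zero-biased copy. -/
theorem zeroBiased_sum_indep {Ω : Type*} [MeasurableSpace Ω] (P : Measure Ω)
    [IsProbabilityMeasure P] (n : ℕ) (X : Fin n → Ω → ℝ)
    (hmeas : ∀ i, Measurable (X i))
    (hindep : iIndepFun X P)
    (hL2 : ∀ i, MemLp (X i) 2 P) (hvar : ∀ i, 0 < variance (X i) P)
    (ν : Fin n → Measure ℝ) (hνprob : ∀ i, IsProbabilityMeasure (ν i))
    (hν : ∀ i, IsZeroBiased (Measure.map (X i) P) (ν i)) :
    IsZeroBiased (Measure.map (fun ω => ∑ i, X i ω) P)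
      (∑ i : Fin n,
        ENNReal.ofReal (variance (X i) P / variance (fun ω => ∑ j, X j ω) P) •
          (Measure.conv (Measure.map (fun ω => ∑ j ∈ Finset.univ.erase i, X j ω) P) (ν i))) :=
  zeroBiased_sum_indep_general P n X hmeas hindep hL2 ν hνprob hν
end
end

section
/- Let X have the logarithmic distribution with parameter p ∈ (0,1) and let (pX)^s be the size-biased version of pX; let X̃ have density f(y) = E[X 1{X ≥ y/p}]/(p E[X²]) for y ≥ 0. Then the Wasserstein distance between the law of (pX)^s and the law of X̃ equals p/2. -/
/-!
Write `q = 1 - p`. Size-biasing cancels the factor `1 / (i + 1)` of the logarithmic weights, so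
`(pX)^s` is geometric: it puts mass `p q^i` at `p (i + 1)`, and its survival function is `q^k` on
`(p k, p (k + 1)]`. On the same interval the density of `X̃` is the constant `q^k`, so the survival
function of `X̃` there is `q^k (p (k + 1) - x) + q^(k + 1)`. The two differ by `q^k (x - p k)`,
whose integral over the interval is `q^k p² / 2`, and summing over `k` gives `p / 2`.
-/

open MeasureTheory Set Function
open scoped ENNReal

section SumDirac

variable {α ι : Type*} [MeasurableSpace α]

theorem lintegral_sum_dirac [MeasurableSingletonClass α] (w : ι → ℝ≥0∞) (a : ι → α)
    (g : α → ℝ≥0∞) :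
    ∫⁻ x, g x ∂(Measure.sum fun i => w i • Measure.dirac (a i))
      = ∑' i, w i * g (a i) := by
  simp [lintegral_sum_measure, lintegral_dirac]

theorem sum_dirac_apply (w : ι → ℝ≥0∞) (a : ι → α) {s : Set α}
    (hs : MeasurableSet s) :
    (Measure.sum fun i => w i • Measure.dirac (a i)) s = ∑' i, w i * s.indicator 1 (a i) := by
  simp [Measure.sum_apply _ hs, Measure.dirac_apply' _ hs]

theorem withDensity_sum_dirac [MeasurableSingletonClass α] (w : ι → ℝ≥0∞) (a : ι → α)
    (g : α → ℝ≥0∞) :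
    (Measure.sum fun i => w i • Measure.dirac (a i)).withDensity g
      = Measure.sum fun i => (w i * g (a i)) • Measure.dirac (a i) := by
  simp [withDensity_sum, withDensity_smul_measure, dirac_withDensity, mul_smul]

theorem map_sum_dirac {β : Type*} [MeasurableSpace β] {φ : α → β} (hφ : Measurable φ)
    (w : ι → ℝ≥0∞) (a : ι → α) :
    (Measure.sum fun i => w i • Measure.dirac (a i)).map φ
      = Measure.sum fun i => w i • Measure.dirac (φ (a i)) := by
  simp [Measure.map_sum hφ.aemeasurable, Measure.map_smul, Measure.map_dirac' hφ]

theorem integral_sum_dirac_of_nonneg [MeasurableSingletonClass α] {w : ι → ℝ}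
    (hw : ∀ i, 0 ≤ w i) (a : ι → α) {f : α → ℝ} (hf : Measurable f)
    (hfa : ∀ i, 0 ≤ f (a i)) {s : ℝ}
    (hs : HasSum (fun i => w i * f (a i)) s) :
    ∫ x, f x ∂(Measure.sum fun i => ENNReal.ofReal (w i) • Measure.dirac (a i)) = s := by
  have hf0 : 0 ≤ᵐ[Measure.sum fun i => ENNReal.ofReal (w i) • Measure.dirac (a i)] f := by
    simp only [Filter.EventuallyLE, ae_iff, Pi.zero_apply, not_le]
    rw [sum_dirac_apply _ _ (measurableSet_lt hf measurable_const)]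
    simp [hfa]
  have hterm (i : ι) : ENNReal.ofReal (w i) * ENNReal.ofReal (f (a i))
      = ENNReal.ofReal (w i * f (a i)) := (ENNReal.ofReal_mul (hw i)).symm
  have hnn (i : ι) : 0 ≤ w i * f (a i) := mul_nonneg (hw i) (hfa i)
  rw [integral_eq_lintegral_of_nonneg_ae hf0 hf.aestronglyMeasurable, lintegral_sum_dirac,
    tsum_congr hterm, ← ENNReal.ofReal_tsum_of_nonneg hnn hs.summable, hs.tsum_eq,
    ENNReal.toReal_ofReal (hs.nonneg hnn)]

end SumDirac

section Pieces

variable {p x : ℝ}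

theorem mul_natCast_lt_iff_of_mem_Ioc (hp : 0 < p) {k : ℕ}
    (hx : x ∈ Ioc (p * k) (p * (k + 1))) (j : ℕ) : p * j < x ↔ j ≤ k := by
  constructor
  · intro hj
    by_contra! hkj
    have : (k : ℝ) + 1 ≤ j := by exact_mod_cast hkj
    nlinarith [hx.2]
  · intro hjk
    have : (j : ℝ) ≤ k := by exact_mod_cast hjk
    nlinarith [hx.1]

theorem le_mul_natCast_add_one_iff_of_mem_Ioc (hp : 0 < p) {k : ℕ}
    (hx : x ∈ Ioc (p * k) (p * (k + 1))) (i : ℕ) : x ≤ p * (i + 1) ↔ k ≤ i := by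
  have h := mul_natCast_lt_iff_of_mem_Ioc hp hx (i + 1)
  push_cast at h
  rw [← not_lt, h]
  omega

theorem exists_mem_Ioc_mul_natCast (hp : 0 < p) (hx : 0 < x) :
    ∃ k : ℕ, x ∈ Ioc (p * k) (p * (k + 1)) := by
  have hceil : ⌈x / p⌉₊ ≠ 0 := (Nat.ceil_pos.2 (div_pos hx hp)).ne'
  obtain ⟨hlt, hle⟩ := (Nat.ceil_eq_iff hceil).1 rfl
  refine ⟨⌈x / p⌉₊ - 1, (lt_div_iff₀' hp).1 hlt, ?_⟩
  rw [Nat.cast_sub (Nat.one_le_iff_ne_zero.2 hceil), Nat.cast_one, sub_add_cancel]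
  exact (div_le_iff₀' hp).1 hle

theorem pairwise_disjoint_Ioc_mul_natCast (hp : 0 < p) :
    Pairwise (Disjoint on fun k : ℕ => Ioc (p * k) (p * (k + 1))) := by
  intro i j hij
  refine Set.disjoint_left.2 fun y hi hj => hij (le_antisymm ?_ ?_)
  · exact (mul_natCast_lt_iff_of_mem_Ioc hp hj i).1 hi.1
  · exact (mul_natCast_lt_iff_of_mem_Ioc hp hi j).1 hj.1

theorem Ioi_mul_natCast_eq_iUnion (hp : 0 < p) (m : ℕ) :
    Ioi (p * m) = ⋃ n : ℕ, Ioc (p * ↑(m + n)) (p * (↑(m + n) + 1)) := by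
  ext y
  simp only [mem_Ioi, mem_iUnion]
  constructor
  · intro hy
    obtain ⟨k, hk⟩ := exists_mem_Ioc_mul_natCast hp (lt_of_le_of_lt (by positivity) hy)
    have hmk := (mul_natCast_lt_iff_of_mem_Ioc hp hk m).1 hy
    exact ⟨k - m, by rwa [Nat.add_sub_cancel' hmk]⟩
  · rintro ⟨n, hn⟩
    exact (mul_natCast_lt_iff_of_mem_Ioc hp hn m).2 (Nat.le_add_right m n)

theorem measure_Ioi_mul_natCast (hp : 0 < p) (ν : Measure ℝ) (m : ℕ) :
    ν (Ioi (p * m)) = ∑' n : ℕ, ν (Ioc (p * ↑(m + n)) (p * (↑(m + n) + 1))) := by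
  rw [Ioi_mul_natCast_eq_iUnion hp m, measure_iUnion
    ((pairwise_disjoint_Ioc_mul_natCast hp).comp_of_injective (add_right_injective m))
    fun _ => measurableSet_Ioc]

end Pieces

section Geometric

theorem hasSum_ite_le_of_hasSum_add {M : Type*} [AddCommMonoid M] [TopologicalSpace M]
    {f : ℕ → M} {s : M} (k : ℕ) (h : HasSum (fun n => f (k + n)) s) :
    HasSum (fun i => if k ≤ i then f i else 0) s := by
  refine (Injective.hasSum_iff (add_right_injective k) fun i hi => if_neg ?_).1 ?_
  · exact fun hki => hi ⟨i - k, Nat.add_sub_cancel' hki⟩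
  · simpa [comp_def] using h

theorem ENNReal.tsum_ofReal_of_hasSum {ι : Type*} {f : ι → ℝ} {s : ℝ}
    (hf : ∀ i, 0 ≤ f i) (h : HasSum f s) : ∑' i, ENNReal.ofReal (f i) = ENNReal.ofReal s := by
  rw [← ENNReal.ofReal_tsum_of_nonneg hf h.summable, h.tsum_eq]

variable {p : ℝ}

theorem hasSum_one_sub_pow_add_mul (hp0 : 0 < p) (hp2 : p < 2) (m : ℕ) :
    HasSum (fun n : ℕ => (1 - p) ^ (m + n) * p) ((1 - p) ^ m) := by
  have hq : |1 - p| < 1 := abs_lt.2 ⟨by linarith, by linarith⟩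
  have h := (hasSum_geometric_of_abs_lt_one hq).mul_left ((1 - p) ^ m * p)
  rw [sub_sub_cancel, mul_assoc, mul_inv_cancel₀ hp0.ne', mul_one] at h
  exact h.congr_fun fun n => by ring

theorem hasSum_natCast_add_one_mul_one_sub_pow (hp0 : 0 < p) (hp2 : p < 2) :
    HasSum (fun i : ℕ => ((i : ℝ) + 1) * (1 - p) ^ (i + 1)) ((1 - p) / p ^ 2) := by
  have h := (hasSum_nat_add_iff' (f := fun n : ℕ => (n : ℝ) * (1 - p) ^ n) 1).2
    (hasSum_coe_mul_geometric_of_norm_lt_one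
      (by rw [Real.norm_eq_abs]; exact abs_lt.2 ⟨by linarith, by linarith⟩))
  rw [Finset.sum_range_one, Nat.cast_zero, zero_mul, sub_zero, sub_sub_cancel] at h
  exact h.congr_fun fun i => by push_cast; rfl

end Geometric

section Survival

variable {p x : ℝ}

theorem sum_dirac_geometric_apply_Ici (hp0 : 0 < p) (hp1 : p < 1) {k : ℕ}
    (hx : x ∈ Ioc (p * k) (p * (k + 1))) :
    (Measure.sum fun i : ℕ =>
        ENNReal.ofReal (p * (1 - p) ^ i) • Measure.dirac (p * ((i : ℝ) + 1))) (Ici x)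
      = ENNReal.ofReal ((1 - p) ^ k) := by
  have hterm (i : ℕ) :
      ENNReal.ofReal (p * (1 - p) ^ i) * (Ici x).indicator 1 (p * ((i : ℝ) + 1))
        = ENNReal.ofReal (if k ≤ i then (1 - p) ^ i * p else 0) := by
    by_cases hki : k ≤ i
    · have hmem : p * ((i : ℝ) + 1) ∈ Ici x :=
        (le_mul_natCast_add_one_iff_of_mem_Ioc hp0 hx i).2 hki
      simp [hki, hmem, mul_comm]
    · have hmem : p * ((i : ℝ) + 1) ∉ Ici x :=
        mt (le_mul_natCast_add_one_iff_of_mem_Ioc hp0 hx i).1 hki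
      simp [hki, hmem]
  rw [sum_dirac_apply _ _ measurableSet_Ici, tsum_congr hterm,
    ENNReal.tsum_ofReal_of_hasSum (fun i => by split_ifs <;> positivity)
      (hasSum_ite_le_of_hasSum_add k (hasSum_one_sub_pow_add_mul hp0 (by linarith) k))]

theorem withDensity_apply_Ici_of_eq_on_Ioc (hp0 : 0 < p) (hp1 : p < 1) {D : ℝ → ℝ≥0∞}
    (hD : ∀ (j : ℕ), ∀ y ∈ Ioc (p * j) (p * (j + 1)), D y = ENNReal.ofReal ((1 - p) ^ j))
    {k : ℕ} (hx : x ∈ Ioc (p * k) (p * (k + 1))) :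
    volume.withDensity D (Ici x)
      = ENNReal.ofReal ((1 - p) ^ k * (p * (k + 1) - x) + (1 - p) ^ (k + 1)) := by
  have hIoc (j : ℕ) {a : ℝ} (ha : a ∈ Icc (p * j) (p * (j + 1))) :
      volume.withDensity D (Ioc a (p * (j + 1)))
        = ENNReal.ofReal ((1 - p) ^ j * (p * (j + 1) - a)) := by
    rw [withDensity_apply _ measurableSet_Ioc,
      setLIntegral_congr_fun measurableSet_Ioc fun y hy => hD j y ⟨ha.1.trans_lt hy.1, hy.2⟩,
      setLIntegral_const, Real.volume_Ioc, ← ENNReal.ofReal_mul (by positivity)]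
  have htail (m : ℕ) : volume.withDensity D (Ioi (p * m)) = ENNReal.ofReal ((1 - p) ^ m) := by
    have hpiece (n : ℕ) : volume.withDensity D (Ioc (p * ↑(m + n)) (p * (↑(m + n) + 1)))
        = ENNReal.ofReal ((1 - p) ^ (m + n) * p) := by
      rw [hIoc (m + n) ⟨le_rfl, by nlinarith⟩]
      ring_nf
    rw [measure_Ioi_mul_natCast hp0, tsum_congr hpiece,
      ENNReal.tsum_ofReal_of_hasSum (fun n => by positivity)
        (hasSum_one_sub_pow_add_mul hp0 (by linarith) m)]
  have hIci : volume.withDensity D (Ici x) = volume.withDensity D (Ioi x) :=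
    measure_congr ((withDensity_absolutelyContinuous _ _).ae_eq Ioi_ae_eq_Ici).symm
  have htail' := htail (k + 1)
  push_cast at htail'
  rw [hIci, ← Ioc_union_Ioi_eq_Ioi hx.2,
    measure_union (Ioc_disjoint_Ioi le_rfl) measurableSet_Ioi, hIoc k ⟨hx.1.le, hx.2⟩, htail',
    ← ENNReal.ofReal_add (mul_nonneg (by positivity) (by linarith [hx.2])) (by positivity)]

end Survival

theorem lintegral_Ioc_ofReal_mul_sub {a b c : ℝ} (hc : 0 ≤ c) (hab : a ≤ b) :
    ∫⁻ x in Ioc a b, ENNReal.ofReal (c * (x - a)) = ENNReal.ofReal (c * (b - a) ^ 2 / 2) := by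
  have hint : IntegrableOn (fun x => c * (x - a)) (Ioc a b) :=
    (continuous_const.mul (continuous_id.sub continuous_const)).integrableOn_Ioc
  have hnn : 0 ≤ᵐ[volume.restrict (Ioc a b)] fun x => c * (x - a) :=
    (ae_restrict_iff' measurableSet_Ioc).2
      (ae_of_all _ fun x hx => mul_nonneg hc (sub_nonneg.2 hx.1.le))
  rw [← ofReal_integral_eq_lintegral_ofReal hint hnn, ← intervalIntegral.integral_of_le hab,
    intervalIntegral.integral_const_mul,
    intervalIntegral.integral_comp_sub_right (fun x => x), integral_id]
  congr 1
  ring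

theorem antitoneOn_toReal_measure_Ici {ν : Measure ℝ} {s : Set ℝ}
    (hν : ∀ x ∈ s, ν (Ici x) ≠ ∞) : AntitoneOn (fun x => (ν (Ici x)).toReal) s :=
  fun x hx _ _ hxy => ENNReal.toReal_mono (hν x hx) (measure_mono (Ici_subset_Ici.2 hxy))

theorem integral_abs_sub_survival_of_step {p : ℝ} (hp0 : 0 < p) (hp1 : p < 1)
    {ν₁ ν₂ : Measure ℝ}
    (h₁ : ∀ (k : ℕ), ∀ x ∈ Ioc (p * k) (p * (k + 1)),
      ν₁ (Ici x) = ENNReal.ofReal ((1 - p) ^ k))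
    (h₂ : ∀ (k : ℕ), ∀ x ∈ Ioc (p * k) (p * (k + 1)),
      ν₂ (Ici x) = ENNReal.ofReal ((1 - p) ^ k * (p * (k + 1) - x) + (1 - p) ^ (k + 1))) :
    ∫ x in Ioi 0, |(ν₁ (Ici x)).toReal - (ν₂ (Ici x)).toReal| = p / 2 := by
  have hpiece (k : ℕ) (x : ℝ) (hx : x ∈ Ioc (p * k) (p * (k + 1))) :
      |(ν₁ (Ici x)).toReal - (ν₂ (Ici x)).toReal| = (1 - p) ^ k * (x - p * k) := by
    have hq : 0 ≤ 1 - p := by linarith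
    rw [h₁ k x hx, h₂ k x hx, ENNReal.toReal_ofReal (by positivity),
      ENNReal.toReal_ofReal (add_nonneg (mul_nonneg (by positivity) (by linarith [hx.2]))
        (by positivity))]
    rw [← abs_of_nonneg (mul_nonneg (pow_nonneg hq k) (sub_nonneg.2 hx.1.le))]
    ring_nf
  have haemeas {ν : Measure ℝ} (h : ∀ (k : ℕ), ∀ x ∈ Ioc (p * k) (p * (k + 1)),
      ∃ r : ℝ, ν (Ici x) = ENNReal.ofReal r) :
      AEMeasurable (fun x => (ν (Ici x)).toReal) (volume.restrict (Ioi 0)) := by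
    refine aemeasurable_restrict_of_antitoneOn measurableSet_Ioi
      (antitoneOn_toReal_measure_Ici fun x hx => ?_)
    obtain ⟨k, hk⟩ := exists_mem_Ioc_mul_natCast hp0 hx
    obtain ⟨r, hr⟩ := h k x hk
    exact hr ▸ ENNReal.ofReal_ne_top
  have hmeas : AEStronglyMeasurable (fun x => |(ν₁ (Ici x)).toReal - (ν₂ (Ici x)).toReal|)
      (volume.restrict (Ioi 0)) := ((haemeas fun k x hx => ⟨_, h₁ k x hx⟩).sub
    (haemeas fun k x hx => ⟨_, h₂ k x hx⟩)).abs.aestronglyMeasurable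
  have hIoi : Ioi (0 : ℝ) = ⋃ k : ℕ, Ioc (p * k) (p * (k + 1)) := by
    simpa using Ioi_mul_natCast_eq_iUnion hp0 0
  have hsum : HasSum (fun k : ℕ => (1 - p) ^ k * p ^ 2 / 2) (p / 2) := by
    have h := (hasSum_one_sub_pow_add_mul hp0 (by linarith) 0).mul_right (p / 2)
    rw [pow_zero, one_mul] at h
    exact h.congr_fun fun k => by ring
  rw [integral_eq_lintegral_of_nonneg_ae (ae_of_all _ fun _ => abs_nonneg _) hmeas, hIoi,
    lintegral_iUnion (fun _ => measurableSet_Ioc) (pairwise_disjoint_Ioc_mul_natCast hp0)]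
  have hpieceInt (k : ℕ) : ∫⁻ x in Ioc (p * k) (p * (k + 1)),
      ENNReal.ofReal |(ν₁ (Ici x)).toReal - (ν₂ (Ici x)).toReal|
        = ENNReal.ofReal ((1 - p) ^ k * p ^ 2 / 2) := by
    rw [setLIntegral_congr_fun measurableSet_Ioc fun x hx => by rw [hpiece k x hx],
      lintegral_Ioc_ofReal_mul_sub (pow_nonneg (by linarith) k) (by nlinarith)]
    ring_nf
  rw [tsum_congr hpieceInt, ENNReal.tsum_ofReal_of_hasSum (fun k => by positivity) hsum,
    ENNReal.toReal_ofReal (by positivity)]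

-- Meant for `μ` with finite positive mean: otherwise `x / 0 = 0` makes it the zero measure.
noncomputable def sizeBias (μ : Measure ℝ) : Measure ℝ :=
  μ.withDensity fun x => ENNReal.ofReal (x / ∫ y, y ∂μ)

noncomputable def logarithmicWeight (p : ℝ) (i : ℕ) : ℝ :=
  -(1 - p) ^ (i + 1) / (((i : ℝ) + 1) * Real.log p)

noncomputable def logarithmicMeasure (p : ℝ) : Measure ℝ :=
  Measure.sum fun i : ℕ =>
    ENNReal.ofReal (logarithmicWeight p i) • Measure.dirac ((i : ℝ) + 1)

section Logarithmic

variable {p : ℝ}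

theorem logarithmicWeight_mul (i : ℕ) :
    logarithmicWeight p i * ((i : ℝ) + 1) = (1 - p) ^ (i + 1) / -Real.log p := by
  unfold logarithmicWeight
  field_simp

theorem logarithmicWeight_nonneg (hp0 : 0 < p) (hp1 : p < 1) (i : ℕ) :
    0 ≤ logarithmicWeight p i := by
  have hlog : 0 < -Real.log p := neg_pos.2 (Real.log_neg hp0 hp1)
  rw [logarithmicWeight, neg_div, ← div_neg, ← mul_neg]
  positivity

theorem integral_id_map_mul_logarithmicMeasure (hp0 : 0 < p) (hp1 : p < 1) :
    ∫ y, y ∂(Measure.map (fun x => p * x) (logarithmicMeasure p)) = (1 - p) / -Real.log p := by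
  have hs := (hasSum_one_sub_pow_add_mul hp0 (by linarith) 1).div_const (-Real.log p)
  rw [pow_one] at hs
  rw [logarithmicMeasure, map_sum_dirac (measurable_const_mul p)]
  refine integral_sum_dirac_of_nonneg (logarithmicWeight_nonneg hp0 hp1) _ measurable_id
    (fun i => (by positivity : 0 ≤ p * ((i : ℝ) + 1))) (hs.congr_fun fun i => ?_)
  rw [id, mul_left_comm, logarithmicWeight_mul, add_comm 1 i]
  ring

theorem integral_sq_logarithmicMeasure (hp0 : 0 < p) (hp1 : p < 1) :
    ∫ x, x ^ 2 ∂(logarithmicMeasure p) = (1 - p) / (p ^ 2 * -Real.log p) := by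
  have hs := (hasSum_natCast_add_one_mul_one_sub_pow hp0 (by linarith)).div_const (-Real.log p)
  rw [div_div] at hs
  refine integral_sum_dirac_of_nonneg (logarithmicWeight_nonneg hp0 hp1) _
    (by fun_prop) (fun i => by positivity) (hs.congr_fun fun i => ?_)
  rw [sq, ← mul_assoc, logarithmicWeight_mul]
  ring

theorem integral_mul_indicator_Ici_logarithmicMeasure (hp0 : 0 < p) (hp1 : p < 1) {k : ℕ}
    {y : ℝ} (hy : y ∈ Ioc (p * k) (p * (k + 1))) :
    ∫ x, x * (Ici (y / p)).indicator (fun _ => (1 : ℝ)) x ∂(logarithmicMeasure p)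
      = (1 - p) ^ (k + 1) / (p * -Real.log p) := by
  have hs := hasSum_ite_le_of_hasSum_add (f := fun i => (1 - p) ^ (i + 1) / -Real.log p) k
    (((hasSum_one_sub_pow_add_mul hp0 (by linarith) (k + 1)).div_const
      (p * -Real.log p)).congr_fun fun n => by
        field_simp
        ring_nf)
  refine integral_sum_dirac_of_nonneg (logarithmicWeight_nonneg hp0 hp1) _
    (f := fun x => x * (Ici (y / p)).indicator (fun _ => (1 : ℝ)) x)
    (measurable_id.mul (measurable_const.indicator measurableSet_Ici))
    (fun i => mul_nonneg (by positivity) (indicator_nonneg (fun _ _ => zero_le_one) _))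
    (hs.congr_fun fun i => ?_)
  have hmem : (i : ℝ) + 1 ∈ Ici (y / p) ↔ k ≤ i := by
    rw [mem_Ici, div_le_iff₀ hp0, mul_comm]
    exact le_mul_natCast_add_one_iff_of_mem_Ioc hp0 hy i
  by_cases hki : k ≤ i
  · rw [if_pos hki, indicator_of_mem (hmem.2 hki), mul_one, logarithmicWeight_mul]
  · rw [if_neg hki, indicator_of_notMem (mt hmem.1 hki), mul_zero, mul_zero]

theorem sizeBias_map_mul_logarithmicMeasure (hp0 : 0 < p) (hp1 : p < 1) :
    sizeBias (Measure.map (fun x => p * x) (logarithmicMeasure p))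
      = Measure.sum fun i : ℕ =>
          ENNReal.ofReal (p * (1 - p) ^ i) • Measure.dirac (p * ((i : ℝ) + 1)) := by
  have hlog : Real.log p ≠ 0 := (Real.log_neg hp0 hp1).ne
  have hq : 1 - p ≠ 0 := by linarith
  rw [sizeBias, integral_id_map_mul_logarithmicMeasure hp0 hp1, logarithmicMeasure,
    map_sum_dirac (measurable_const_mul p), withDensity_sum_dirac]
  congr 1
  funext i
  rw [← ENNReal.ofReal_mul (logarithmicWeight_nonneg hp0 hp1 i), mul_div, mul_left_comm,
    logarithmicWeight_mul]
  congr 2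
  field_simp
  ring

theorem equilibriumDensity_logarithmicMeasure (hp0 : 0 < p) (hp1 : p < 1) {k : ℕ}
    {y : ℝ} (hy : y ∈ Ioc (p * k) (p * (k + 1))) :
    (if 0 ≤ y then
        (∫ x, x * (Ici (y / p)).indicator (fun _ => (1 : ℝ)) x ∂(logarithmicMeasure p))
          / (p * ∫ x, x ^ 2 ∂(logarithmicMeasure p)) else 0) = (1 - p) ^ k := by
  have hlog : Real.log p ≠ 0 := (Real.log_neg hp0 hp1).ne
  have hq : 1 - p ≠ 0 := by linarith
  rw [if_pos (by nlinarith [hy.1]), integral_mul_indicator_Ici_logarithmicMeasure hp0 hp1 hy,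
    integral_sq_logarithmicMeasure hp0 hp1]
  field_simp
  ring

end Logarithmic

/-- Let `X` be logarithmic with parameter `p`. Then the Wasserstein distance (computed via
the integrated difference of survival functions) between the size-biased version of `pX`
and the random variable `X̃` with density `y ↦ E[X 1{X ≥ y/p}]/(p E[X²])` equals `p/2`. -/
theorem wasserstein_sizeBiased_equilibrium_logarithmic (p : ℝ) (hp0 : 0 < p) (hp1 : p < 1)
    (μX ν₁ ν₂ : Measure ℝ)
    (hμX : μX = Measure.sum fun i : ℕ =>
      ENNReal.ofReal (-(1 - p) ^ (i + 1) / (((i : ℝ) + 1) * Real.log p)) •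
        Measure.dirac (((i : ℝ) + 1)))
    (hν₁ : ν₁ = (Measure.map (fun x => p * x) μX).withDensity fun x =>
      ENNReal.ofReal (x / ∫ y, y ∂(Measure.map (fun x => p * x) μX)))
    (hν₂ : ν₂ = volume.withDensity fun y =>
      ENNReal.ofReal (if 0 ≤ y then
        (∫ x, x * Set.indicator (Set.Ici (y / p)) (fun _ => (1 : ℝ)) x ∂μX)
          / (p * ∫ x, x ^ 2 ∂μX) else 0)) :
    ∫ x in Set.Ioi (0 : ℝ), |(ν₁ (Set.Ici x)).toReal - (ν₂ (Set.Ici x)).toReal| = p / 2 := by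
  have hμ : μX = logarithmicMeasure p := hμX
  subst hμ
  have hν₁' : ν₁ = sizeBias (Measure.map (fun x => p * x) (logarithmicMeasure p)) := hν₁
  rw [sizeBias_map_mul_logarithmicMeasure hp0 hp1] at hν₁'
  refine integral_abs_sub_survival_of_step hp0 hp1 (fun k x hx => ?_) (fun k x hx => ?_)
  · rw [hν₁', sum_dirac_geometric_apply_Ici hp0 hp1 hx]
  · rw [hν₂]
    exact withDensity_apply_Ici_of_eq_on_Ioc hp0 hp1
      (fun j y hy => by rw [equilibriumDensity_logarithmicMeasure hp0 hp1 hy]) hx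
end
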